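/- Single-copy lower bound on the optimal error probability: For all quantum states ρ, σ on ℂ^d and all p ∈ (0,1) with q := 1 − p, (1/2)·(1 − ‖p·ρ − q·σ‖₁) ≥ p·q·F(ρ,σ). -/

import Mathlib

open scoped ComplexOrder Classical

noncomputable section

namespace QHT

variable {ι : Type*} [Fintype ι] [DecidableEq ι]

/-- The positive semidefinite square root of a positive semidefinite matrix, as
`Matrix.PosSemidef.sqrt` was defined in Mathlib (Dec 2024). -/
def psdSqrt {A : Matrix ι ι ℂ} (hA : A.PosSemidef) : Matrix ι ι ℂ :=
  (hA.1.eigenvectorUnitary : Matrix ι ι ℂ) *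
    Matrix.diagonal ((↑) ∘ (fun x : ℝ => Real.sqrt x) ∘ hA.1.eigenvalues) *
    (star (hA.1.eigenvectorUnitary : Matrix ι ι ℂ))

/-- Trace norm of a complex matrix: `Tr[√(Aᴴ A)]`. -/
def traceNorm (A : Matrix ι ι ℂ) : ℝ :=
  ((psdSqrt (Matrix.posSemidef_conjTranspose_mul_self A)).trace).re

/-- A quantum state: positive semidefinite with unit trace. -/
def IsState (ρ : Matrix ι ι ℂ) : Prop := ρ.PosSemidef ∧ ρ.trace = 1

/-- Positive semidefinite square root (junk value `0` off the PSD matrices). -/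
def matSqrt (A : Matrix ι ι ℂ) : Matrix ι ι ℂ :=
  if h : A.PosSemidef then psdSqrt h else 0

/-- Real power of a Hermitian matrix, applying `x ↦ x ^ s` to positive
eigenvalues and `x ↦ 0` to the remaining ones (so `A ^ 0` is the support
projection); junk value `0` off the Hermitian matrices. -/
def matRpow (A : Matrix ι ι ℂ) (s : ℝ) : Matrix ι ι ℂ :=
  if h : A.IsHermitian then
    (h.eigenvectorUnitary : Matrix ι ι ℂ) *
      Matrix.diagonal (fun i =>
        ((if 0 < h.eigenvalues i then (h.eigenvalues i) ^ s else 0 : ℝ) : ℂ)) *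
      (star (h.eigenvectorUnitary : Matrix ι ι ℂ))
  else 0

/-- Fidelity `F(ρ,σ) = ‖√ρ √σ‖₁²`. -/
def Fid (ρ σ : Matrix ι ι ℂ) : ℝ := (traceNorm (matSqrt ρ * matSqrt σ)) ^ 2

/-- Holevo fidelity `F_H(ρ,σ) = (Tr[√ρ √σ])²`. -/
def FidH (ρ σ : Matrix ι ι ℂ) : ℝ := (((matSqrt ρ * matSqrt σ).trace).re) ^ 2

/-- `Q_s(A‖B) = Tr[A^s B^{1-s}]`. -/
def Qs (s : ℝ) (A B : Matrix ι ι ℂ) : ℝ := ((matRpow A s * matRpow B (1 - s)).trace).re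

/-- `Q_min(A‖B) = min_{s ∈ [0,1]} Q_s(A‖B)`. -/
def Qmin (A B : Matrix ι ι ℂ) : ℝ :=
  sInf { x : ℝ | ∃ s ∈ Set.Icc (0 : ℝ) 1, x = Qs s A B }

/-- Bures distance. -/
def dB (ρ σ : Matrix ι ι ℂ) : ℝ := Real.sqrt (2 * (1 - Real.sqrt (Fid ρ σ)))

/-- Quantum Hellinger distance. -/
def dH (ρ σ : Matrix ι ι ℂ) : ℝ := Real.sqrt (2 * (1 - Real.sqrt (FidH ρ σ)))

/-- `n`-fold Kronecker (tensor) power of a matrix. -/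
def tensorPow {d : ℕ} (A : Matrix (Fin d) (Fin d) ℂ) (n : ℕ) :
    Matrix (Fin n → Fin d) (Fin n → Fin d) ℂ :=
  Matrix.of fun i j => ∏ k, A (i k) (j k)

/-- Optimal error probability of symmetric binary quantum hypothesis testing
with `n` copies. -/
def pErr {d : ℕ} (p : ℝ) (ρ : Matrix (Fin d) (Fin d) ℂ) (q : ℝ)
    (σ : Matrix (Fin d) (Fin d) ℂ) (n : ℕ) : ℝ :=
  sInf { x : ℝ | ∃ Λ : Matrix (Fin n → Fin d) (Fin n → Fin d) ℂ,
    Λ.PosSemidef ∧ (1 - Λ).PosSemidef ∧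
    x = p * (((1 - Λ) * tensorPow ρ n).trace).re + q * ((Λ * tensorPow σ n).trace).re }

/-- Sample complexity of symmetric binary quantum hypothesis testing. -/
def sampleComplexity {d : ℕ} (p : ℝ) (ρ : Matrix (Fin d) (Fin d) ℂ) (q : ℝ)
    (σ : Matrix (Fin d) (Fin d) ℂ) (ε : ℝ) : ℕ :=
  sInf { n : ℕ | 1 ≤ n ∧ pErr p ρ q σ n ≤ ε }

/-- Optimal type II error `β_ε(ρ‖σ)` of asymmetric hypothesis testing. -/
def betaErr (ε : ℝ) (ρ σ : Matrix ι ι ℂ) : ℝ :=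
  sInf { x : ℝ | ∃ Λ : Matrix ι ι ℂ, Λ.PosSemidef ∧ (1 - Λ).PosSemidef ∧
    (((1 - Λ) * ρ).trace).re ≤ ε ∧ x = ((Λ * σ).trace).re }

/-- Sample complexity of asymmetric binary quantum hypothesis testing. -/
def sampleComplexityAsym {d : ℕ} (ρ σ : Matrix (Fin d) (Fin d) ℂ) (ε δ : ℝ) : ℕ :=
  sInf { n : ℕ | 1 ≤ n ∧ betaErr ε (tensorPow ρ n) (tensorPow σ n) ≤ δ }

/-- Petz–Rényi divergence `D_α(ρ‖σ)`. -/
def petzRenyi (α : ℝ) (ρ σ : Matrix ι ι ℂ) : ℝ :=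
  (1 / (α - 1)) * Real.log (((matRpow ρ α * matRpow σ (1 - α)).trace).re)

/-- Sandwiched Rényi divergence `D̃_α(ρ‖σ)`. -/
def sandwichedRenyi (α : ℝ) (ρ σ : Matrix ι ι ℂ) : ℝ :=
  (1 / (α - 1)) * Real.log
    (((matRpow (matRpow σ ((1 - α) / (2 * α)) * ρ * matRpow σ ((1 - α) / (2 * α))) α).trace).re)


open Matrix
open scoped MatrixOrder

/-!
Measure both states in an eigenbasis `U` of `p ρ - q σ`, with outcome distributions
`P i = (Uᴴ ρ U)ᵢᵢ` and `Q i = (Uᴴ σ U)ᵢᵢ`. Then `‖p ρ - q σ‖₁ = ∑ |p P i - q Q i|`, so the right-hand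
side is the classical error `∑ min (p P i) (q Q i)`, while the fidelity can only grow under the
measurement: writing `‖√ρ √σ‖₁ = Re Tr (√ρ √σ C)` for a contraction `C` (polar decomposition) and
inserting `U Uᴴ = 1`, Cauchy–Schwarz on each column gives `‖√ρ √σ‖₁ ≤ ∑ √(P i) √(Q i)`. Finally
`p q (∑ √(P i Q i))² ≤ ∑ min (p P i) (q Q i)` is Cauchy–Schwarz again, after
`a b ≤ min a b · (a + b)`.
-/

section
variable {m n κ : Type*}

lemma re_diag_nonneg_of_posSemidef [Fintype n] {A : Matrix n n ℂ} (hA : A.PosSemidef)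
    (i : n) : 0 ≤ (A i i).re :=
  (Complex.le_def.mp hA.diag_nonneg).1

lemma re_conjTranspose_mul_apply_le [Fintype m] (X Y : Matrix m n ℂ) (i : n) :
    ((Xᴴ * Y) i i).re ≤ √((Xᴴ * X) i i).re * √((Yᴴ * Y) i i).re := by
  let col (Z : Matrix m n ℂ) : EuclideanSpace ℂ m := WithLp.toLp 2 fun k => Z k i
  have hinner (Z W : Matrix m n ℂ) : (Zᴴ * W) i i = inner ℂ (col Z) (col W) := by
    simp [col, mul_apply, PiLp.inner_apply, mul_comm]
  have := re_inner_le_norm (𝕜 := ℂ) (col X) (col Y)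
  rwa [norm_eq_sqrt_re_inner (𝕜 := ℂ), norm_eq_sqrt_re_inner (𝕜 := ℂ), ← hinner, ← hinner,
    ← hinner] at this

lemma sq_sum_sqrt_mul_sqrt_le_sum_add_mul_sum_min (s : Finset κ) {a b : κ → ℝ}
    (ha : ∀ i, 0 ≤ a i) (hb : ∀ i, 0 ≤ b i) :
    (∑ i ∈ s, √(a i) * √(b i)) ^ 2 ≤ (∑ i ∈ s, (a i + b i)) * ∑ i ∈ s, min (a i) (b i) := by
  have hterm (i : κ) : √(a i) * √(b i) ≤ √(min (a i) (b i)) * √(a i + b i) := by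
    rw [← Real.sqrt_mul (ha i), ← Real.sqrt_mul (le_min (ha i) (hb i))]
    refine Real.sqrt_le_sqrt ?_
    rcases le_total (a i) (b i) with h | h
    · rw [min_eq_left h]; nlinarith [ha i]
    · rw [min_eq_right h]; nlinarith [hb i]
  have hsum := (Finset.sum_le_sum fun i _ => hterm i).trans <|
    Real.sum_sqrt_mul_sqrt_le s (fun i => le_min (ha i) (hb i)) fun i => add_nonneg (ha i) (hb i)
  calc (∑ i ∈ s, √(a i) * √(b i)) ^ 2
      ≤ (√(∑ i ∈ s, min (a i) (b i)) * √(∑ i ∈ s, (a i + b i))) ^ 2 :=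
        pow_le_pow_left₀ (by positivity) hsum 2
    _ = (∑ i ∈ s, (a i + b i)) * ∑ i ∈ s, min (a i) (b i) := by
      rw [mul_pow, Real.sq_sqrt, Real.sq_sqrt, mul_comm]
      · exact Finset.sum_nonneg fun i _ => add_nonneg (ha i) (hb i)
      · exact Finset.sum_nonneg fun i _ => le_min (ha i) (hb i)

lemma mul_mul_sq_sum_sqrt_mul_sqrt_le (s : Finset κ) {p q : ℝ} (hp : 0 ≤ p) (hq : 0 ≤ q)
    {P Q : κ → ℝ} (hP : ∀ i, 0 ≤ P i) (hQ : ∀ i, 0 ≤ Q i) :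
    p * q * (∑ i ∈ s, √(P i) * √(Q i)) ^ 2 ≤
      (∑ i ∈ s, (p * P i + q * Q i)) * ∑ i ∈ s, min (p * P i) (q * Q i) := by
  have hscale : p * q * (∑ i ∈ s, √(P i) * √(Q i)) ^ 2 =
      (∑ i ∈ s, √(p * P i) * √(q * Q i)) ^ 2 := by
    simp_rw [Real.sqrt_mul hp, Real.sqrt_mul hq, mul_mul_mul_comm, ← Finset.mul_sum, mul_pow,
      Real.sq_sqrt hp, Real.sq_sqrt hq]
  rw [hscale]
  exact sq_sum_sqrt_mul_sqrt_le_sum_add_mul_sum_min s (fun i => mul_nonneg hp (hP i))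
    fun i => mul_nonneg hq (hQ i)

lemma sum_min_eq_sum_add_sub_sum_abs_div_two (s : Finset κ) (a b : κ → ℝ) :
    ∑ i ∈ s, min (a i) (b i) = (∑ i ∈ s, (a i + b i) - ∑ i ∈ s, |a i - b i|) / 2 := by
  rw [← Finset.sum_sub_distrib, Finset.sum_div]
  exact Finset.sum_congr rfl fun i _ => by grind

end

lemma psdSqrt_eq_cfc {A : Matrix ι ι ℂ} (hA : A.PosSemidef) : psdSqrt hA = cfc Real.sqrt A := by
  rw [hA.1.cfc_eq]; rfl

lemma matSqrt_eq_sqrt {A : Matrix ι ι ℂ} (hA : A.PosSemidef) : matSqrt A = CFC.sqrt A := by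
  rw [matSqrt, dif_pos hA, psdSqrt_eq_cfc, CFC.sqrt_eq_real_sqrt A hA.nonneg, cfcₙ_eq_cfc]

lemma traceNorm_eq_re_trace_abs (M : Matrix ι ι ℂ) : traceNorm M = (CFC.abs M).trace.re := by
  rw [traceNorm, psdSqrt_eq_cfc, CFC.abs, star_eq_conjTranspose,
    CFC.sqrt_eq_real_sqrt _ (posSemidef_conjTranspose_mul_self M).nonneg, cfcₙ_eq_cfc]

lemma traceNorm_nonneg (M : Matrix ι ι ℂ) : 0 ≤ traceNorm M := by
  rw [traceNorm_eq_re_trace_abs]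
  exact (Complex.le_def.mp (nonneg_iff_posSemidef.mp (CFC.abs_nonneg M)).trace_nonneg).1

lemma traceNorm_eq_sum_abs_eigenvalues {A : Matrix ι ι ℂ} (hA : A.IsHermitian) :
    traceNorm A = ∑ i, |hA.eigenvalues i| := by
  rw [traceNorm_eq_re_trace_abs, CFC.abs_eq_cfc_norm A hA.isSelfAdjoint, hA.cfc_eq,
    IsHermitian.cfc, Unitary.conjStarAlgAut_apply, trace_mul_cycle, Unitary.coe_star_mul_self,
    one_mul, trace_diagonal, Complex.re_sum]
  simp

lemma sum_re_diag_conj_unitary {U : Matrix ι ι ℂ} (hU : U ∈ unitaryGroup ι ℂ)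
    (A : Matrix ι ι ℂ) :
    ∑ i, ((Uᴴ * A * U) i i).re = A.trace.re := by
  rw [← Complex.re_sum]
  change (Uᴴ * A * U).trace.re = _
  rw [trace_mul_cycle, ← star_eq_conjTranspose, mem_unitaryGroup_iff.mp hU, one_mul]

lemma eigenvalues_eq_re_diag_conj {A : Matrix ι ι ℂ} (hA : A.IsHermitian) (i : ι) :
    hA.eigenvalues i =
      (((hA.eigenvectorUnitary : Matrix ι ι ℂ)ᴴ * A * hA.eigenvectorUnitary) i i).re := by
  have hdiag := hA.conjStarAlgAut_star_eigenvectorUnitary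
  rw [Unitary.conjStarAlgAut_star_apply, star_eq_conjTranspose] at hdiag
  simp [hdiag]

lemma exists_traceNorm_eq_re_trace_mul (M : Matrix ι ι ℂ) :
    ∃ C : Matrix ι ι ℂ, (1 - C * Cᴴ).PosSemidef ∧ traceNorm M = (M * C).trace.re := by
  set N := Mᴴ * M
  have hN : N.PosSemidef := posSemidef_conjTranspose_mul_self M
  have hNsa : IsSelfAdjoint N := hN.isHermitian.isSelfAdjoint
  have hcont (g : ℝ → ℝ) : ContinuousOn g (spectrum ℝ N) := finite_real_spectrum.continuousOn g
  -- `C = |M|⁺ Mᴴ` with `|M|⁺` the pseudo-inverse of `|M| = √(MᴴM)`: the adjoint of the partial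
  -- isometry in the polar decomposition `M = W |M|`.
  set f : ℝ → ℝ := fun x => (√x)⁻¹
  have hfN : (cfc f N)ᴴ = cfc f N := (cfc_predicate f N).star_eq
  refine ⟨cfc f N * Mᴴ, ?_, ?_⟩
  · have hCC : cfc f N * Mᴴ * (cfc f N * Mᴴ)ᴴ = cfc (fun x => f x * x * f x) N := by
      rw [conjTranspose_mul, conjTranspose_conjTranspose, hfN, cfc_mul _ _ N (hcont _) (hcont _),
        cfc_mul _ _ N (hcont _) (hcont _), cfc_id' ℝ N hNsa]
      simp only [N, mul_assoc]
    rw [hCC, ← cfc_one ℝ N hNsa, ← cfc_sub _ _ N (hcont _) (hcont _), ← nonneg_iff_posSemidef]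
    refine cfc_nonneg fun x hx => ?_
    have hx0 : 0 ≤ x := spectrum_nonneg_of_nonneg hN.nonneg hx
    rw [sub_nonneg, mul_right_comm, ← sq, inv_pow, Real.sq_sqrt hx0]
    exact inv_mul_le_one_of_le₀ le_rfl hx0
  · have hfN_mul : cfc f N * N = cfc Real.sqrt N := by
      calc cfc f N * N = cfc f N * cfc (fun x => x) N := by rw [cfc_id' ℝ N hNsa]
        _ = cfc (fun x => f x * x) N := (cfc_mul _ _ N (hcont _) (hcont _)).symm
        _ = cfc Real.sqrt N := by
          congr 1; funext x; rw [mul_comm, ← div_eq_mul_inv, Real.div_sqrt]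
    rw [trace_mul_comm, mul_assoc, hfN_mul, traceNorm, psdSqrt_eq_cfc]

lemma traceNorm_mul_le_sum_sqrt_mul_sqrt {R S U : Matrix ι ι ℂ} (hR : R.IsHermitian)
    (hS : S.IsHermitian) (hU : U ∈ unitaryGroup ι ℂ) :
    traceNorm (R * S) ≤ ∑ i, √((Uᴴ * (R * R) * U) i i).re * √((Uᴴ * (S * S) * U) i i).re := by
  obtain ⟨C, hC, hnorm⟩ := exists_traceNorm_eq_re_trace_mul (R * S)
  set X := Cᴴ * S * U
  set Y := R * U
  have hXY : (R * S * C).trace = (Xᴴ * Y).trace := by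
    have hUU : U * Uᴴ = 1 := mem_unitaryGroup_iff.mp hU
    calc (R * S * C).trace = (S * C * R * (U * Uᴴ)).trace := by
          rw [hUU, mul_one, mul_assoc, trace_mul_comm]
      _ = (Uᴴ * (S * C * R) * U).trace := by rw [trace_mul_cycle Uᴴ, trace_mul_comm (S * C * R)]
      _ = (Xᴴ * Y).trace := by
          simp only [X, Y, conjTranspose_mul, conjTranspose_conjTranspose, hS.eq, mul_assoc]
  have hYY : Yᴴ * Y = Uᴴ * (R * R) * U := by
    simp only [Y, conjTranspose_mul, hR.eq, mul_assoc]
  have hXX (i : ι) : ((Xᴴ * X) i i).re ≤ ((Uᴴ * (S * S) * U) i i).re := by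
    have hgap : (Uᴴ * (S * S) * U - Xᴴ * X).PosSemidef := by
      convert hC.conjTranspose_mul_mul_same (S * U) using 1
      simp only [X, conjTranspose_mul, conjTranspose_conjTranspose, hS.eq]
      noncomm_ring
    simpa using re_diag_nonneg_of_posSemidef hgap i
  rw [hnorm, hXY, trace, Complex.re_sum]
  refine Finset.sum_le_sum fun i _ => ?_
  rw [mul_comm, ← hYY]
  exact (re_conjTranspose_mul_apply_le X Y i).trans
    (mul_le_mul_of_nonneg_right (Real.sqrt_le_sqrt (hXX i)) (Real.sqrt_nonneg _))

lemma fid_le_sq_sum_sqrt_mul_sqrt {ρ σ U : Matrix ι ι ℂ} (hρ : ρ.PosSemidef) (hσ : σ.PosSemidef)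
    (hU : U ∈ unitaryGroup ι ℂ) :
    Fid ρ σ ≤ (∑ i, √((Uᴴ * ρ * U) i i).re * √((Uᴴ * σ * U) i i).re) ^ 2 := by
  have hsqrt {A : Matrix ι ι ℂ} (hA : A.PosSemidef) :
      (matSqrt A).IsHermitian ∧ matSqrt A * matSqrt A = A := by
    rw [matSqrt_eq_sqrt hA]
    exact ⟨(nonneg_iff_posSemidef.mp (CFC.sqrt_nonneg A)).isHermitian,
      CFC.sqrt_mul_sqrt_self A hA.nonneg⟩
  obtain ⟨hRh, hRR⟩ := hsqrt hρ
  obtain ⟨hSh, hSS⟩ := hsqrt hσ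
  have := traceNorm_mul_le_sum_sqrt_mul_sqrt hRh hSh hU
  rw [hRR, hSS] at this
  exact pow_le_pow_left₀ (traceNorm_nonneg _) this 2

/-- **Single-copy lower bound on the optimal error probability**:
`(1/2)(1 − ‖pρ − qσ‖₁) ≥ pq·F(ρ,σ)`. -/
theorem err_prob_ge_fidelity {d : ℕ} (ρ σ : Matrix (Fin d) (Fin d) ℂ)
    (hρ : IsState ρ) (hσ : IsState σ)
    (p q : ℝ) (hp : p ∈ Set.Ioo (0 : ℝ) 1) (hq : q = 1 - p) :
    p * q * Fid ρ σ ≤ (1 / 2) * (1 - traceNorm (p • ρ - q • σ)) := by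
  obtain ⟨hρ, hρ_tr⟩ := hρ
  obtain ⟨hσ, hσ_tr⟩ := hσ
  have hp0 : 0 ≤ p := hp.1.le
  have hq0 : 0 ≤ q := by linarith [hp.2]
  have hA : (p • ρ - q • σ).IsHermitian :=
    (hρ.1.smul (IsSelfAdjoint.all p)).sub (hσ.1.smul (IsSelfAdjoint.all q))
  set U : Matrix (Fin d) (Fin d) ℂ := (hA.eigenvectorUnitary : Matrix (Fin d) (Fin d) ℂ)
  have hU : U ∈ unitaryGroup (Fin d) ℂ := hA.eigenvectorUnitary.2
  set P : Fin d → ℝ := fun i => ((Uᴴ * ρ * U) i i).re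
  set Q : Fin d → ℝ := fun i => ((Uᴴ * σ * U) i i).re
  have heig (i : Fin d) : hA.eigenvalues i = p * P i - q * Q i := by
    simp [eigenvalues_eq_re_diag_conj, P, Q, U, mul_sub, sub_mul]
  have htotal : ∑ i, (p * P i + q * Q i) = 1 := by
    rw [Finset.sum_add_distrib, ← Finset.mul_sum, ← Finset.mul_sum, sum_re_diag_conj_unitary hU,
      sum_re_diag_conj_unitary hU, hρ_tr, hσ_tr, Complex.one_re, hq]
    ring
  calc p * q * Fid ρ σ ≤ p * q * (∑ i, √(P i) * √(Q i)) ^ 2 :=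
        mul_le_mul_of_nonneg_left (fid_le_sq_sum_sqrt_mul_sqrt hρ hσ hU) (mul_nonneg hp0 hq0)
    _ ≤ (∑ i, (p * P i + q * Q i)) * ∑ i, min (p * P i) (q * Q i) :=
        mul_mul_sq_sum_sqrt_mul_sqrt_le _ hp0 hq0
          (fun i => re_diag_nonneg_of_posSemidef (hρ.conjTranspose_mul_mul_same U) i)
          (fun i => re_diag_nonneg_of_posSemidef (hσ.conjTranspose_mul_mul_same U) i)
    _ = (1 / 2) * (1 - traceNorm (p • ρ - q • σ)) := by
        rw [htotal, one_mul, sum_min_eq_sum_add_sub_sum_abs_div_two, htotal,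
          traceNorm_eq_sum_abs_eigenvalues hA]
        simp_rw [heig]
        ring

end QHT

end
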